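/- arXiv:2511.21061 — 6 statements merged into one kernel-verified Lean document; each statement's English description precedes it below -/
import Mathlib

section
/- Let Γ be a finite simple graph each of whose edges is colored red, green, or blue, with R red edges, G green edges, and B blue edges, and let T be the number of rainbow triangles in Γ. Then T^2 ≤ 2·R·G·B. -/
open scoped Classical

noncomputable section

namespace RainbowTri

variable {V : Type*} [Fintype V]

/-- The finset of edges of `Γ` having color `c` (red = 0, green = 1, blue = 2). -/
def colorEdges (Γ : SimpleGraph V) (col : Sym2 V → Fin 3) (c : Fin 3) : Finset (Sym2 V) :=
  Finset.univ.filter (fun e => e ∈ Γ.edgeSet ∧ col e = c)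

/-- The finset of rainbow triangles: 3-sets of pairwise adjacent vertices whose three
edges receive three distinct colors. -/
def rainbowTriangles (Γ : SimpleGraph V) (col : Sym2 V → Fin 3) : Finset (Finset V) :=
  Finset.univ.filter (fun s => ∃ a b c : V, s = {a, b, c} ∧
    Γ.Adj a b ∧ Γ.Adj a c ∧ Γ.Adj b c ∧
    col s(a, b) ≠ col s(a, c) ∧ col s(a, b) ≠ col s(b, c) ∧ col s(a, c) ≠ col s(b, c))

/-- The finset of properly 3-edge-colored copies of `K₄`: 4-sets of pairwise adjacent
vertices on which each color appears on exactly two (disjoint) of the six edges. -/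
def properK4s (Γ : SimpleGraph V) (col : Sym2 V → Fin 3) : Finset (Finset V) :=
  Finset.univ.filter (fun s => ∃ a b c d : V, s = {a, b, c, d} ∧
    Γ.Adj a b ∧ Γ.Adj a c ∧ Γ.Adj a d ∧ Γ.Adj b c ∧ Γ.Adj b d ∧ Γ.Adj c d ∧
    col s(a, b) = col s(c, d) ∧ col s(a, c) = col s(b, d) ∧ col s(a, d) = col s(b, c) ∧
    col s(a, b) ≠ col s(a, c) ∧ col s(a, b) ≠ col s(a, d) ∧ col s(a, c) ≠ col s(a, d))

/-- The color pattern of a proper 3-edge-coloring of `K₄` on vertex set `Fin 4`: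
opposite edges get the same color ({0,1},{2,3} ↦ 0; {0,2},{1,3} ↦ 1; {0,3},{1,2} ↦ 2). -/
def pairColor (i j : Fin 4) : Fin 3 :=
  ⟨((i.val ^^^ j.val) - 1) % 3, Nat.mod_lt _ (by norm_num)⟩

/-- `Γ` (with edge coloring `col`) is obtained from a blowup of a properly
3-edge-colored `K₄` by possibly adding a set of isolated vertices: vertices mapped to
`none` are isolated, vertices are adjacent iff they lie in distinct parts, and colors
between parts follow the proper `K₄`-pattern up to a permutation `σ` of the colors. -/
def IsBlowupK4PlusIsolated (Γ : SimpleGraph V) (col : Sym2 V → Fin 3) : Prop :=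
  ∃ (P : V → Option (Fin 4)) (σ : Equiv.Perm (Fin 3)),
    (∀ u v : V, Γ.Adj u v ↔ ∃ i j : Fin 4, i ≠ j ∧ P u = some i ∧ P v = some j) ∧
    (∀ (u v : V) (i j : Fin 4), P u = some i → P v = some j → Γ.Adj u v →
      col s(u, v) = σ (pairColor i j))

/-- As `IsBlowupK4PlusIsolated`, where moreover the four parts have equal size. -/
def IsBalancedBlowupK4PlusIsolated (Γ : SimpleGraph V) (col : Sym2 V → Fin 3) : Prop :=
  ∃ (P : V → Option (Fin 4)) (σ : Equiv.Perm (Fin 3)),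
    (∀ u v : V, Γ.Adj u v ↔ ∃ i j : Fin 4, i ≠ j ∧ P u = some i ∧ P v = some j) ∧
    (∀ (u v : V) (i j : Fin 4), P u = some i → P v = some j → Γ.Adj u v →
      col s(u, v) = σ (pairColor i j)) ∧
    (∀ i j : Fin 4, (Finset.univ.filter (fun v => P v = some i)).card
      = (Finset.univ.filter (fun v => P v = some j)).card)

/-- `Γ` (with edge coloring `col`) is a balanced blowup of a properly 3-edge-colored
`K₄` (no extra isolated vertices). -/
def IsBalancedBlowupK4 (Γ : SimpleGraph V) (col : Sym2 V → Fin 3) : Prop :=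
  ∃ (P : V → Fin 4) (σ : Equiv.Perm (Fin 3)),
    (∀ u v : V, Γ.Adj u v ↔ P u ≠ P v) ∧
    (∀ u v : V, Γ.Adj u v → col s(u, v) = σ (pairColor (P u) (P v))) ∧
    (∀ i j : Fin 4, (Finset.univ.filter (fun v => P v = i)).card
      = (Finset.univ.filter (fun v => P v = j)).card)

/-- `d⁺(u,v)`: the number of vertices `w` with `uw` blue and `vw` green. -/
def dPlus (Γ : SimpleGraph V) (col : Sym2 V → Fin 3) (u v : V) : ℕ :=
  (Finset.univ.filter (fun w => Γ.Adj u w ∧ col s(u, w) = 2 ∧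
    Γ.Adj v w ∧ col s(v, w) = 1)).card

/-- `d⁻(u,v)`: the number of vertices `w` with `uw` green and `vw` blue. -/
def dMinus (Γ : SimpleGraph V) (col : Sym2 V → Fin 3) (u v : V) : ℕ :=
  (Finset.univ.filter (fun w => Γ.Adj u w ∧ col s(u, w) = 1 ∧
    Γ.Adj v w ∧ col s(v, w) = 2)).card

/-- `d_K(u,v)`: the number of ordered pairs `(w,x)` with `wx` red, `uw`, `vx` green
and `ux`, `vw` blue. -/
def dK (Γ : SimpleGraph V) (col : Sym2 V → Fin 3) (u v : V) : ℕ :=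
  (Finset.univ.filter (fun p : V × V => Γ.Adj p.1 p.2 ∧ col s(p.1, p.2) = 0 ∧
    Γ.Adj u p.1 ∧ col s(u, p.1) = 1 ∧ Γ.Adj v p.2 ∧ col s(v, p.2) = 1 ∧
    Γ.Adj u p.2 ∧ col s(u, p.2) = 2 ∧ Γ.Adj v p.1 ∧ col s(v, p.1) = 2)).card

/-- Ordered pairs of vertices inducing a red edge. -/
def redPairs (Γ : SimpleGraph V) (col : Sym2 V → Fin 3) : Finset (V × V) :=
  Finset.univ.filter (fun p => Γ.Adj p.1 p.2 ∧ col s(p.1, p.2) = 0)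

/-- The set `S` of ordered tuples `(u,v,x,y)` with `uv` red, `ux`, `uy` blue and
`vx`, `vy` green (`x = y` allowed). -/
def tupleSet (Γ : SimpleGraph V) (col : Sym2 V → Fin 3) : Finset (V × V × V × V) :=
  Finset.univ.filter (fun t => Γ.Adj t.1 t.2.1 ∧ col s(t.1, t.2.1) = 0 ∧
    Γ.Adj t.1 t.2.2.1 ∧ col s(t.1, t.2.2.1) = 2 ∧
    Γ.Adj t.1 t.2.2.2 ∧ col s(t.1, t.2.2.2) = 2 ∧
    Γ.Adj t.2.1 t.2.2.1 ∧ col s(t.2.1, t.2.2.1) = 1 ∧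
    Γ.Adj t.2.1 t.2.2.2 ∧ col s(t.2.1, t.2.2.2) = 1)

/-! Each rainbow triangle has exactly one labelling `(u, v, w)` with `uv` red, `uw` blue and
`vw` green, so `T = ∑ d⁺(u, v)` over the `2R` ordered red pairs `(u, v)`. By Cauchy–Schwarz,
`T² ≤ 2R · ∑ d⁺(u, v)²`, and `∑ d⁺(u, v)²` counts the tuples `(u, v, x, y)` with `uv` red,
`ux`, `uy` blue and `vx`, `vy` green. Such a tuple is determined by its green edge `vx` and
its blue edge `uy`, so there are at most `G·B` of them. -/

open Finset SimpleGraph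

lemma card_filter_product_univ {α β : Type*} [Fintype β] (s : Finset α) (P : α → β → Prop)
    [∀ a, DecidablePred (P a)] :
    #((s ×ˢ univ).filter fun q => P q.1 q.2) = ∑ a ∈ s, #(univ.filter (P a)) := by
  simp only [card_filter, sum_product]

lemma card_filter_fst_and_snd {β : Type*} [Fintype β] (P : β → Prop) [DecidablePred P] :
    #(univ.filter fun q : β × β => P q.1 ∧ P q.2) = #(univ.filter P) ^ 2 := by
  rw [← univ_product_univ, filter_product, card_product, sq]

lemma fin_three_cases_of_ne {x y z : Fin 3} (hxy : x ≠ y) (hxz : x ≠ z) (hyz : y ≠ z) :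
    x = 0 ∧ y = 2 ∧ z = 1 ∨ x = 0 ∧ y = 1 ∧ z = 2 ∨ x = 1 ∧ y = 0 ∧ z = 2 ∨
      x = 1 ∧ y = 2 ∧ z = 0 ∨ x = 2 ∧ y = 0 ∧ z = 1 ∨ x = 2 ∧ y = 1 ∧ z = 0 := by
  revert x y z; decide

def colorSubgraph {C : Type*} (Γ : SimpleGraph V) (col : Sym2 V → C) (c : C) :
    SimpleGraph V where
  Adj u v := Γ.Adj u v ∧ col s(u, v) = c
  symm := ⟨fun _ _ h => ⟨h.1.symm, Sym2.eq_swap ▸ h.2⟩⟩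
  loopless := ⟨fun _ h => h.1.ne rfl⟩

lemma colorEdges_eq_edgeFinset (Γ : SimpleGraph V) (col : Sym2 V → Fin 3) (c : Fin 3) :
    colorEdges Γ col c = (colorSubgraph Γ col c).edgeFinset := by
  ext e
  induction e using Sym2.ind with
  | _ u v => simp only [colorEdges, mem_filter, mem_univ, true_and, mem_edgeFinset]; rfl

lemma card_redPairs (Γ : SimpleGraph V) (col : Sym2 V → Fin 3) :
    #(redPairs Γ col) = 2 * #(colorEdges Γ col 0) := by
  let e : (colorSubgraph Γ col 0).Dart ≃
      {p : V × V // Γ.Adj p.1 p.2 ∧ col s(p.1, p.2) = 0} :=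
    { toFun d := ⟨d.toProd, d.adj⟩
      invFun p := ⟨p.1, p.2⟩
      left_inv _ := rfl
      right_inv _ := rfl }
  rw [redPairs, ← Fintype.card_subtype, ← Fintype.card_congr e, dart_card_eq_twice_card_edges,
    colorEdges_eq_edgeFinset]

def orientedRainbowTriangles (Γ : SimpleGraph V) (col : Sym2 V → Fin 3) : Finset (V × V × V) :=
  univ.filter fun t => Γ.Adj t.1 t.2.1 ∧ col s(t.1, t.2.1) = 0 ∧
    Γ.Adj t.1 t.2.2 ∧ col s(t.1, t.2.2) = 2 ∧ Γ.Adj t.2.1 t.2.2 ∧ col s(t.2.1, t.2.2) = 1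

section OrientedRainbowTriangles

variable {Γ : SimpleGraph V} {col : Sym2 V → Fin 3}

lemma mem_orientedRainbowTriangles {u v w : V} :
    (u, v, w) ∈ orientedRainbowTriangles Γ col ↔ Γ.Adj u v ∧ col s(u, v) = 0 ∧
      Γ.Adj u w ∧ col s(u, w) = 2 ∧ Γ.Adj v w ∧ col s(v, w) = 1 := by
  simp [orientedRainbowTriangles]

lemma exists_orientedRainbowTriangle {a b c : V}
    (hab : Γ.Adj a b) (hac : Γ.Adj a c) (hbc : Γ.Adj b c) (h₁ : col s(a, b) ≠ col s(a, c))
    (h₂ : col s(a, b) ≠ col s(b, c)) (h₃ : col s(a, c) ≠ col s(b, c)) :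
    ∃ t ∈ orientedRainbowTriangles Γ col, ({t.1, t.2.1, t.2.2} : Finset V) = {a, b, c} := by
  have hadj_symm := And.intro hab.symm (And.intro hac.symm hbc.symm)
  rcases fin_three_cases_of_ne h₁ h₂ h₃ with h | h | h | h | h | h
  · exact ⟨(a, b, c), by simp_all [mem_orientedRainbowTriangles]⟩
  · exact ⟨(b, a, c), by simp_all [mem_orientedRainbowTriangles, Sym2.eq_swap],
      by ext; simp; tauto⟩
  · exact ⟨(c, a, b), by simp_all [mem_orientedRainbowTriangles, Sym2.eq_swap],
      by ext; simp; tauto⟩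
  · exact ⟨(c, b, a), by simp_all [mem_orientedRainbowTriangles, Sym2.eq_swap],
      by ext; simp; tauto⟩
  · exact ⟨(a, c, b), by simp_all [mem_orientedRainbowTriangles, Sym2.eq_swap],
      by ext; simp; tauto⟩
  · exact ⟨(b, c, a), by simp_all [mem_orientedRainbowTriangles, Sym2.eq_swap],
      by ext; simp; tauto⟩

/- A vertex of a rainbow triangle is determined by the colors of its two edges: `u` is the one
where red meets blue, `v` where red meets green, `w` where blue meets green. -/
lemma eq_of_mem_orientedRainbowTriangles {t t' : V × V × V}
    (ht : t ∈ orientedRainbowTriangles Γ col) (ht' : t' ∈ orientedRainbowTriangles Γ col)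
    (h : ({t.1, t.2.1, t.2.2} : Finset V) = {t'.1, t'.2.1, t'.2.2}) : t = t' := by
  obtain ⟨u, v, w⟩ := t
  obtain ⟨u', v', w'⟩ := t'
  rw [mem_orientedRainbowTriangles] at ht ht'
  have hu : u' ∈ ({u, v, w} : Finset V) := h ▸ by simp
  have hv : v' ∈ ({u, v, w} : Finset V) := h ▸ by simp
  have hw : w' ∈ ({u, v, w} : Finset V) := h ▸ by simp
  simp only [mem_insert, mem_singleton] at hu hv hw
  have := ht.1.ne; have := ht.2.2.1.ne; have := ht.2.2.2.2.1.ne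
  have := ht'.1.ne; have := ht'.2.2.1.ne; have := ht'.2.2.2.2.1.ne
  rcases hu with rfl | rfl | rfl <;> rcases hv with rfl | rfl | rfl <;>
    rcases hw with rfl | rfl | rfl <;> simp_all [Sym2.eq_swap]

end OrientedRainbowTriangles

lemma card_orientedRainbowTriangles_eq_card_rainbowTriangles (Γ : SimpleGraph V)
    (col : Sym2 V → Fin 3) :
    #(orientedRainbowTriangles Γ col) = #(rainbowTriangles Γ col) := by
  refine card_bij (fun t _ => {t.1, t.2.1, t.2.2}) (fun ⟨u, v, w⟩ ht => ?_)
    (fun t ht t' ht' h => eq_of_mem_orientedRainbowTriangles ht ht' h) (fun s hs => ?_)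
  · obtain ⟨huv, cuv, huw, cuw, hvw, cvw⟩ := mem_orientedRainbowTriangles.1 ht
    simp only [rainbowTriangles, mem_filter, mem_univ, true_and]
    exact ⟨u, v, w, rfl, huv, huw, hvw, by simp [cuv, cuw, cvw]⟩
  · simp only [rainbowTriangles, mem_filter, mem_univ, true_and] at hs
    obtain ⟨a, b, c, rfl, hab, hac, hbc, h₁, h₂, h₃⟩ := hs
    obtain ⟨t, ht, hts⟩ := exists_orientedRainbowTriangle hab hac hbc h₁ h₂ h₃
    exact ⟨t, ht, hts⟩

lemma card_orientedRainbowTriangles_eq_sum_dPlus (Γ : SimpleGraph V) (col : Sym2 V → Fin 3) :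
    #(orientedRainbowTriangles Γ col) = ∑ p ∈ redPairs Γ col, dPlus Γ col p.1 p.2 := by
  simp only [dPlus]
  rw [← card_filter_product_univ]
  refine card_equiv (Equiv.prodAssoc V V V).symm fun ⟨u, v, w⟩ => ?_
  simp [orientedRainbowTriangles, redPairs, and_assoc]

lemma sum_sq_dPlus (Γ : SimpleGraph V) (col : Sym2 V → Fin 3) :
    ∑ p ∈ redPairs Γ col, dPlus Γ col p.1 p.2 ^ 2 = #(tupleSet Γ col) := by
  simp only [dPlus, ← card_filter_fst_and_snd]
  rw [← card_filter_product_univ]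
  refine card_equiv (Equiv.prodAssoc V V (V × V)) fun ⟨⟨u, v⟩, x, y⟩ => ?_
  simp [tupleSet, redPairs]
  tauto

/- Any other way of reading the two edges as `vx` and `uy` gives `ux` or `vy` two different
colors. -/
lemma card_tupleSet_le (Γ : SimpleGraph V) (col : Sym2 V → Fin 3) :
    #(tupleSet Γ col) ≤ #(colorEdges Γ col 1) * #(colorEdges Γ col 2) := by
  rw [← card_product]
  refine card_le_card_of_injOn (fun t => (s(t.2.1, t.2.2.1), s(t.1, t.2.2.2))) ?_ ?_
  · rintro ⟨u, v, x, y⟩ ht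
    simp only [tupleSet, mem_coe, mem_filter, mem_univ, true_and] at ht
    simp [colorEdges, ht]
  · rintro ⟨u, v, x, y⟩ ht ⟨u', v', x', y'⟩ ht' heq
    simp only [tupleSet, mem_coe, mem_filter, mem_univ, true_and] at ht ht'
    simp only [Prod.mk.injEq, Sym2.eq_iff] at heq
    obtain ⟨⟨rfl, rfl⟩ | ⟨rfl, rfl⟩, ⟨rfl, rfl⟩ | ⟨rfl, rfl⟩⟩ := heq <;>
      simp_all [Sym2.eq_swap]

/-- A 3-edge-colored graph with `R` red, `G` green, `B` blue edges and `T` rainbow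
triangles satisfies `T² ≤ 2·R·G·B`. -/
theorem stmt0 (Γ : SimpleGraph V) (col : Sym2 V → Fin 3) (R G B T : ℕ)
    (hR : R = (colorEdges Γ col 0).card)
    (hG : G = (colorEdges Γ col 1).card)
    (hB : B = (colorEdges Γ col 2).card)
    (hT : T = (rainbowTriangles Γ col).card) :
    T ^ 2 ≤ 2 * R * G * B := by
  subst hR hG hB hT
  rw [← card_orientedRainbowTriangles_eq_card_rainbowTriangles,
    card_orientedRainbowTriangles_eq_sum_dPlus]
  calc (∑ p ∈ redPairs Γ col, dPlus Γ col p.1 p.2) ^ 2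
      ≤ #(redPairs Γ col) * ∑ p ∈ redPairs Γ col, dPlus Γ col p.1 p.2 ^ 2 :=
        sq_sum_le_card_mul_sum_sq
    _ = 2 * #(colorEdges Γ col 0) * #(tupleSet Γ col) := by
        rw [card_redPairs, sum_sq_dPlus]
    _ ≤ 2 * #(colorEdges Γ col 0) * (#(colorEdges Γ col 1) * #(colorEdges Γ col 2)) := by
        gcongr; exact card_tupleSet_le Γ col
    _ = 2 * #(colorEdges Γ col 0) * #(colorEdges Γ col 1) * #(colorEdges Γ col 2) := by
        ring

end RainbowTri
end
end

section
/- Let Γ be a finite simple graph each of whose edges is colored red, green, or blue, with R red edges, G green edges, and B blue edges, and let K be the number of properly 3-edge-colored copies of K4 in Γ. If K = (1/4)·(R·G·B)^{2/3} and K > 0, then Γ is obtained from a balanced blowup of a properly 3-edge-colored K4 by possibly adding a set of isolated vertices. -/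
open scoped Classical

noncomputable section

namespace RainbowTri

variable {V : Type*} [Fintype V]

/-!
Fix distinct colours `r, g, b`. An ordered proper `K₄` extending an ordered `r`-edge `(u, v)` is
a pair `(x, y)` with `x ∈ d⁻(u, v)`, `y ∈ d⁺(u, v)` and `xy` of colour `r`; hence
`2 d_K ≤ 2 d⁻ d⁺ ≤ (d⁻)² + (d⁺)²`, and since swapping `u, v` exchanges `d⁻` and `d⁺`,
`4K ≤ #(ordered K₄s) ≤ #S ≤ B·G`, where `(u, v, x, y) ↦ (uy, vx)` injects `S` into pairs of a
`b`-edge and a `g`-edge. Doing this for each colour `r` gives `64 K³ ≤ (RGB)²`, so the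
hypothesis forces equality throughout.

Equality in `#S ≤ B·G` means that every `b`-edge and `g`-edge are linked by a tuple of `S`.
This makes every triangle with two edges of one colour monochromatic, and then each
non-isolated vertex misses exactly one vertex `i` of a fixed proper `K₄` and sees the other
vertices `j` in the colours of the edges `ij`: these are the parts of the blowup. Equality in
the Cauchy–Schwarz step gives `d⁺ = d⁻` on every edge, and on an edge of the base `K₄` these
count two different parts.
-/

open Finset

section PairColor

lemma pairColor_triangle_ne : ∀ i j k : Fin 4, i ≠ j → i ≠ k → j ≠ k →
    pairColor i j ≠ pairColor j k ∧ pairColor i j ≠ pairColor i k ∧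
      pairColor j k ≠ pairColor i k := by decide

lemma pairColor_left_injective : ∀ i i' k : Fin 4, i ≠ k → i' ≠ k →
    pairColor i k = pairColor i' k → i = i' := by decide

lemma exists_pairColor_eq : ∀ c : Fin 3, ∃ i j : Fin 4, i ≠ j ∧ pairColor i j = c := by decide

lemma exists_ne_ne : ∀ i j : Fin 4, ∃ k, k ≠ i ∧ k ≠ j := by decide

lemma exists_pairColor_ne : ∀ (i : Fin 4) (c : Fin 3), ∃ k, k ≠ i ∧ pairColor i k ≠ c := by
  decide

lemma exists_pairColor_eq_pairColor : ∀ m m' : Fin 4, m ≠ m' → ∃ k l : Fin 4,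
    k ≠ l ∧ k ≠ m ∧ l ≠ m ∧ k ≠ m' ∧ l ≠ m' ∧
    pairColor m k = pairColor m' l ∧ pairColor m l = pairColor m' k := by decide

lemma exists_perm_pairColor : ∀ τ : Equiv.Perm (Fin 3), ∃ π : Equiv.Perm (Fin 4),
    ∀ i j, i ≠ j → pairColor (π i) (π j) = τ (pairColor i j) := by decide

-- The Klein four-group acts transitively on the vertices of `K₄` and fixes every colour.
lemma exists_perm_pairColor_apply_zero : ∀ k : Fin 4, ∃ π : Equiv.Perm (Fin 4),
    π 0 = k ∧ ∀ i j, i ≠ j → pairColor (π i) (π j) = pairColor i j := by decide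

-- No vertex joined to all of a proper `K₄` has only monochromatic or rainbow triangles on it.
lemma not_forall_pairColor : ∀ c : Fin 4 → Fin 3, ∃ i j, i ≠ j ∧
    ¬((c i = c j → c i = pairColor i j) ∧ (c i = pairColor i j → c j = pairColor i j)) := by
  decide

lemma exists_perm_of_ne : ∀ r g b : Fin 3, r ≠ g → r ≠ b → g ≠ b →
    ∃ ρ : Equiv.Perm (Fin 3), ρ 0 = r ∧ ρ 1 = g ∧ ρ 2 = b := by decide

lemma exists_ne_of_ne : ∀ c c' : Fin 3, c ≠ c' → ∃ d, d ≠ c ∧ d ≠ c' := by decide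

lemma exists_two_ne : ∀ c : Fin 3, ∃ g r : Fin 3, g ≠ c ∧ r ≠ c ∧ r ≠ g := by decide

end PairColor

section Colored

variable {α : Type*} (Γ : SimpleGraph α) (col : Sym2 α → Fin 3)

def ColoredAdj (c : Fin 3) (u v : α) : Prop := Γ.Adj u v ∧ col s(u, v) = c

-- `(u, v, x, y)` is a tuple of `commonNbrPairs r g b` with outer edges `s(p₁, q₁)`, `s(p₂, q₂)`.
def EdgesLinked (r g b : Fin 3) : Prop :=
  ∀ ⦃p₁ q₁ p₂ q₂ : α⦄, ColoredAdj Γ col b p₁ q₁ → ColoredAdj Γ col g p₂ q₂ →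
    ∃ u y v x, s(u, y) = s(p₁, q₁) ∧ s(v, x) = s(p₂, q₂) ∧
      ColoredAdj Γ col r u v ∧ ColoredAdj Γ col b u x ∧ ColoredAdj Γ col g v y

def IsLinked : Prop :=
  ∀ ⦃r g b : Fin 3⦄, r ≠ g → r ≠ b → g ≠ b → EdgesLinked Γ col r g b

def IsK4Pattern (f : Fin 4 → α) (σ : Equiv.Perm (Fin 3)) : Prop :=
  ∀ i j, i ≠ j → ColoredAdj Γ col (σ (pairColor i j)) (f i) (f j)

variable {Γ col} {u v w p q z : α} {c c' : Fin 3}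

lemma ColoredAdj.symm (h : ColoredAdj Γ col c u v) : ColoredAdj Γ col c v u :=
  ⟨h.1.symm, by rw [Sym2.eq_swap]; exact h.2⟩

lemma ColoredAdj.unique (h : ColoredAdj Γ col c u v) (h' : ColoredAdj Γ col c' u v) : c = c' :=
  h.2.symm.trans h'.2

lemma coloredAdj_col (h : Γ.Adj u v) : ColoredAdj Γ col (col s(u, v)) u v := ⟨h, rfl⟩

lemma IsLinked.coloredAdj_of_coloredAdj (hL : IsLinked Γ col) (hpq : Γ.Adj p q)
    (hzp : ColoredAdj Γ col c z p) (hzq : ColoredAdj Γ col c z q) : ColoredAdj Γ col c p q := by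
  refine ⟨hpq, by_contra fun hne => ?_⟩
  obtain ⟨d, hdc, hdpq⟩ := exists_ne_of_ne c (col s(p, q)) (Ne.symm hne)
  obtain ⟨u, y, v, x, hu, hv, huv, -, -⟩ := hL hdpq hdc hne hzp (coloredAdj_col hpq)
  rcases Sym2.eq_iff.mp hu with ⟨rfl, rfl⟩ | ⟨rfl, rfl⟩ <;>
    rcases Sym2.eq_iff.mp hv with ⟨rfl, rfl⟩ | ⟨rfl, rfl⟩
  · exact hdc (huv.unique hzp)
  · exact hdc (huv.unique hzq)
  · exact Γ.irrefl huv.1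
  · exact hdpq (huv.unique (coloredAdj_col hpq))

lemma IsLinked.exists_col_ne (hL : IsLinked Γ col) (hc : ∀ c, ∃ p q, ColoredAdj Γ col c p q)
    (hvw : Γ.Adj v w) (c : Fin 3) : ∃ z, Γ.Adj v z ∧ col s(v, z) ≠ c := by
  by_cases hvwc : col s(v, w) = c
  · obtain ⟨g, r, hgc, hrc, hrg⟩ := exists_two_ne c
    obtain ⟨p, q, hpq⟩ := hc g
    obtain ⟨u, y, v', x, hu, -, huv, -, hvy⟩ := hL hrg hrc hgc ⟨hvw, hvwc⟩ hpq
    rcases Sym2.eq_iff.mp hu with ⟨rfl, rfl⟩ | ⟨rfl, rfl⟩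
    · exact ⟨v', huv.1, huv.2 ▸ hrc⟩
    · exact ⟨v', hvy.symm.1, hvy.symm.2 ▸ hgc⟩
  · exact ⟨w, hvw, hvwc⟩

lemma IsLinked.coloredAdj_of_not_adj (hL : IsLinked Γ col)
    (hc : ∀ c, ∃ p q, ColoredAdj Γ col c p q) (hvw : Γ.Adj v w) (hpq : ColoredAdj Γ col c p q)
    (hvp : ¬Γ.Adj v p) : ColoredAdj Γ col c v q := by
  obtain ⟨z, hvz, hzc⟩ := hL.exists_col_ne hc hvw c
  obtain ⟨d, hdz, hdc⟩ := exists_ne_of_ne _ _ hzc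
  obtain ⟨u, y, v', x, hu, hv', huv, hux, hvy⟩ := hL hdc hdz hzc.symm (coloredAdj_col hvz) hpq
  rcases Sym2.eq_iff.mp hu with ⟨rfl, rfl⟩ | ⟨rfl, rfl⟩ <;>
    rcases Sym2.eq_iff.mp hv' with ⟨rfl, rfl⟩ | ⟨rfl, rfl⟩
  · exact absurd huv.1 hvp
  · exact absurd hux.1 hvp
  · exact absurd hvy.1.symm hvp
  · exact hvy.symm

variable {f : Fin 4 → α} {σ : Equiv.Perm (Fin 3)}

lemma IsK4Pattern.injective (hf : IsK4Pattern Γ col f σ) : Function.Injective f := by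
  intro i j hij
  by_contra hne
  exact Γ.irrefl (hij ▸ (hf i j hne).1)

lemma IsK4Pattern.comp_perm (hf : IsK4Pattern Γ col f σ) {τ : Equiv.Perm (Fin 3)}
    (π : Equiv.Perm (Fin 4)) (hπ : ∀ i j, i ≠ j → pairColor (π i) (π j) = τ (pairColor i j)) :
    IsK4Pattern Γ col (f ∘ π) (σ * τ) := by
  intro i j hij
  simpa [hπ i j hij] using hf (π i) (π j) (π.injective.ne hij)

lemma IsK4Pattern.exists_coloredAdj (hf : IsK4Pattern Γ col f σ) (c : Fin 3) :
    ∃ p q, ColoredAdj Γ col c p q := by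
  obtain ⟨i, j, hij, hc⟩ := exists_pairColor_eq (σ.symm c)
  exact ⟨f i, f j, by simpa [hc] using hf i j hij⟩

lemma isK4Pattern_vecCons {a b c d : α}
    (hab : ColoredAdj Γ col (σ 0) a b) (hcd : ColoredAdj Γ col (σ 0) c d)
    (hac : ColoredAdj Γ col (σ 1) a c) (hbd : ColoredAdj Γ col (σ 1) b d)
    (had : ColoredAdj Γ col (σ 2) a d) (hbc : ColoredAdj Γ col (σ 2) b c) :
    IsK4Pattern Γ col ![a, b, c, d] σ := by
  intro i j hij
  fin_cases i <;> fin_cases j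
  all_goals first
    | exact absurd rfl hij
    | exact hab | exact hcd | exact hac | exact hbd | exact had | exact hbc
    | exact hab.symm | exact hcd.symm | exact hac.symm | exact hbd.symm | exact had.symm
    | exact hbc.symm

lemma image_univ_fin_four [DecidableEq α] (f : Fin 4 → α) :
    univ.image f = {f 0, f 1, f 2, f 3} := by
  ext x
  simp [Fin.exists_fin_succ, eq_comm]

lemma exists_not_adj_of_isK4Pattern (hL : IsLinked Γ col) (hf : IsK4Pattern Γ col f σ) (v : α) :
    ∃ i, ¬Γ.Adj v (f i) := by
  by_contra! hadj
  obtain ⟨i, j, hij, hc⟩ := not_forall_pairColor fun i => σ.symm (col s(v, f i))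
  refine hc ⟨fun he => ?_, fun he => ?_⟩
  · have hvi : ColoredAdj Γ col (col s(v, f i)) v (f i) := coloredAdj_col (hadj i)
    have hvj : ColoredAdj Γ col (col s(v, f i)) v (f j) := ⟨hadj j, σ.symm.injective he.symm⟩
    exact σ.symm_apply_eq.mpr ((hL.coloredAdj_of_coloredAdj (hf i j hij).1 hvi hvj).unique
      (hf i j hij))
  · have hiv : ColoredAdj Γ col (σ (pairColor i j)) (f i) v :=
      ⟨(hadj i).symm, by rw [Sym2.eq_swap]; exact σ.symm_apply_eq.mp he⟩
    exact σ.symm_apply_eq.mpr (hL.coloredAdj_of_coloredAdj (hadj j) hiv (hf i j hij)).2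

end Colored

section Counting

variable (Γ : SimpleGraph V) (col : Sym2 V → Fin 3)

-- For `(r, g, b) = (0, 1, 2)` these are `redPairs`, `dMinus` (`commonNbrs g b`), `dPlus`
-- (`commonNbrs b g`), `dK` (`k4Completions`) and `tupleSet` (`commonNbrPairs`).
def colorPairs (c : Fin 3) : Finset (V × V) := {p | ColoredAdj Γ col c p.1 p.2}

def commonNbrs (c₁ c₂ : Fin 3) (p : V × V) : Finset V :=
  {w | ColoredAdj Γ col c₁ p.1 w ∧ ColoredAdj Γ col c₂ p.2 w}

def k4Completions (r g b : Fin 3) (p : V × V) : Finset (V × V) :=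
  {q ∈ commonNbrs Γ col g b p ×ˢ commonNbrs Γ col b g p | ColoredAdj Γ col r q.1 q.2}

def orderedK4s (r g b : Fin 3) : Finset (Σ _ : V × V, V × V) :=
  (colorPairs Γ col r).sigma (k4Completions Γ col r g b)

def commonNbrPairs (r g b : Fin 3) : Finset (Σ _ : V × V, V × V) :=
  (colorPairs Γ col r).sigma fun p => commonNbrs Γ col b g p ×ˢ commonNbrs Γ col b g p

variable {Γ col} {r g b c c₁ c₂ : Fin 3}

@[simp]
lemma mem_colorPairs {p : V × V} : p ∈ colorPairs Γ col c ↔ ColoredAdj Γ col c p.1 p.2 := by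
  simp [colorPairs]

@[simp]
lemma mem_commonNbrs {p : V × V} {w : V} :
    w ∈ commonNbrs Γ col c₁ c₂ p ↔ ColoredAdj Γ col c₁ p.1 w ∧ ColoredAdj Γ col c₂ p.2 w := by
  simp [commonNbrs]

@[simp]
lemma mk_mem_colorEdges {u v : V} : s(u, v) ∈ colorEdges Γ col c ↔ ColoredAdj Γ col c u v := by
  simp [colorEdges, ColoredAdj]

lemma commonNbrs_swap (p : V × V) :
    commonNbrs Γ col c₁ c₂ p.swap = commonNbrs Γ col c₂ c₁ p := by
  ext w
  simp [and_comm]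

lemma sum_card_commonNbrs_sq_comm :
    ∑ p ∈ colorPairs Γ col r, #(commonNbrs Γ col c₁ c₂ p) ^ 2
      = ∑ p ∈ colorPairs Γ col r, #(commonNbrs Γ col c₂ c₁ p) ^ 2 := by
  refine sum_nbij' Prod.swap Prod.swap (fun p hp => ?_) (fun p hp => ?_) (fun _ _ => rfl)
    (fun _ _ => rfl) (fun p _ => by rw [← commonNbrs_swap p.swap, Prod.swap_swap])
  · simpa using (mem_colorPairs.mp hp).symm
  · simpa using (mem_colorPairs.mp hp).symm

lemma card_k4Completions_le (p : V × V) :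
    #(k4Completions Γ col r g b p) ≤ #(commonNbrs Γ col g b p) * #(commonNbrs Γ col b g p) :=
  (card_filter_le _ _).trans_eq (card_product _ _)

lemma sum_sq_card_commonNbrs_sub_le :
    ∑ p ∈ colorPairs Γ col r,
        ((#(commonNbrs Γ col g b p) : ℤ) - #(commonNbrs Γ col b g p)) ^ 2
      ≤ 2 * ((#(commonNbrPairs Γ col r g b) : ℤ) - #(orderedK4s Γ col r g b)) := by
  have hsq : ∑ p ∈ colorPairs Γ col r, (#(commonNbrs Γ col g b p) : ℤ) ^ 2
      = ∑ p ∈ colorPairs Γ col r, (#(commonNbrs Γ col b g p) : ℤ) ^ 2 := by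
    exact_mod_cast sum_card_commonNbrs_sq_comm
  have hK : ∀ p ∈ colorPairs Γ col r,
      ((#(commonNbrs Γ col g b p) : ℤ) - #(commonNbrs Γ col b g p)) ^ 2
        ≤ (#(commonNbrs Γ col g b p) : ℤ) ^ 2 + (#(commonNbrs Γ col b g p) : ℤ) ^ 2
          - 2 * #(k4Completions Γ col r g b p) := fun p _ => by
    have := card_k4Completions_le (Γ := Γ) (col := col) (r := r) (g := g) (b := b) p
    zify at this
    nlinarith
  calc _ ≤ _ := sum_le_sum hK
    _ = _ := by
      rw [sum_sub_distrib, sum_add_distrib, hsq, ← mul_sum]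
      simp only [commonNbrPairs, orderedK4s, card_sigma, card_product, ← sq]
      push_cast
      ring

lemma card_orderedK4s_le : #(orderedK4s Γ col r g b) ≤ #(commonNbrPairs Γ col r g b) := by
  have h := sum_sq_card_commonNbrs_sub_le (Γ := Γ) (col := col) (r := r) (g := g) (b := b)
  have h0 := sum_nonneg fun p (_ : p ∈ colorPairs Γ col r) =>
    sq_nonneg ((#(commonNbrs Γ col g b p) : ℤ) - #(commonNbrs Γ col b g p))
  omega

lemma card_commonNbrs_eq_of_card_le
    (h : #(commonNbrPairs Γ col r g b) ≤ #(orderedK4s Γ col r g b)) {p : V × V}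
    (hp : p ∈ colorPairs Γ col r) : #(commonNbrs Γ col g b p) = #(commonNbrs Γ col b g p) := by
  have hsum := sum_sq_card_commonNbrs_sub_le (Γ := Γ) (col := col) (r := r) (g := g) (b := b)
  have hzero : ∑ p ∈ colorPairs Γ col r,
      ((#(commonNbrs Γ col g b p) : ℤ) - #(commonNbrs Γ col b g p)) ^ 2 = 0 :=
    le_antisymm (by omega) (sum_nonneg fun _ _ => sq_nonneg _)
  have := (sum_eq_zero_iff_of_nonneg fun _ _ => sq_nonneg _).mp hzero p hp
  exact_mod_cast sub_eq_zero.mp (pow_eq_zero_iff two_ne_zero |>.mp this)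

def outerEdges (t : Σ _ : V × V, V × V) : Sym2 V × Sym2 V := (s(t.1.1, t.2.2), s(t.1.2, t.2.1))

lemma mapsTo_outerEdges :
    Set.MapsTo outerEdges (commonNbrPairs Γ col r g b : Set (Σ _ : V × V, V × V))
      (colorEdges Γ col b ×ˢ colorEdges Γ col g : Finset (Sym2 V × Sym2 V)) := by
  rintro ⟨⟨u, v⟩, x, y⟩ ht
  simp only [commonNbrPairs, coe_sigma, Set.mem_sigma_iff, mem_coe, mem_colorPairs,
    mem_product, mem_commonNbrs] at ht
  simp only [outerEdges, coe_product, Set.mem_prod, mem_coe, mk_mem_colorEdges]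
  exact ⟨ht.2.2.1, ht.2.1.2⟩

lemma injOn_outerEdges (hrg : r ≠ g) (hrb : r ≠ b) (hgb : g ≠ b) :
    Set.InjOn outerEdges (commonNbrPairs Γ col r g b : Set (Σ _ : V × V, V × V)) := by
  rintro ⟨⟨u, v⟩, x, y⟩ ht ⟨⟨u', v'⟩, x', y'⟩ ht' heq
  simp only [commonNbrPairs, coe_sigma, Set.mem_sigma_iff, mem_coe, mem_colorPairs,
    mem_product, mem_commonNbrs] at ht ht'
  simp only [outerEdges, Prod.mk.injEq] at heq
  obtain ⟨huv, ⟨hux, hvx⟩, huy, hvy⟩ := ht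
  obtain ⟨huv', ⟨hux', hvx'⟩, huy', hvy'⟩ := ht'
  rcases Sym2.eq_iff.mp heq.1 with ⟨rfl, rfl⟩ | ⟨rfl, rfl⟩ <;>
    rcases Sym2.eq_iff.mp heq.2 with ⟨rfl, rfl⟩ | ⟨rfl, rfl⟩
  · rfl
  · exact absurd (huv'.unique hux) hrb
  · exact absurd (huv'.unique hvy.symm) hrg
  · exact absurd (hux'.unique hvy.symm).symm hgb

lemma card_commonNbrPairs_le (hrg : r ≠ g) (hrb : r ≠ b) (hgb : g ≠ b) :
    #(commonNbrPairs Γ col r g b) ≤ #(colorEdges Γ col b) * #(colorEdges Γ col g) :=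
  (card_le_card_of_injOn _ mapsTo_outerEdges (injOn_outerEdges hrg hrb hgb)).trans_eq
    (card_product _ _)

lemma edgesLinked_of_card_le (hrg : r ≠ g) (hrb : r ≠ b) (hgb : g ≠ b)
    (h : #(colorEdges Γ col b) * #(colorEdges Γ col g) ≤ #(commonNbrPairs Γ col r g b)) :
    EdgesLinked Γ col r g b := by
  intro p₁ q₁ p₂ q₂ h₁ h₂
  obtain ⟨⟨⟨u, v⟩, x, y⟩, ht, he⟩ := surjOn_of_injOn_of_card_le _ mapsTo_outerEdges
    (injOn_outerEdges hrg hrb hgb) (by rwa [card_product])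
    (show (s(p₁, q₁), s(p₂, q₂)) ∈ (colorEdges Γ col b ×ˢ colorEdges Γ col g : Finset _) by
      simpa using ⟨h₁, h₂⟩)
  simp only [commonNbrPairs, coe_sigma, Set.mem_sigma_iff, mem_coe, mem_colorPairs,
    mem_product, mem_commonNbrs] at ht
  simp only [outerEdges, Prod.mk.injEq] at he
  exact ⟨u, y, v, x, he.1, he.2, ht.1, ht.2.1.1, ht.2.2.2⟩

lemma mem_properK4s_of_mem_orderedK4s (hrg : r ≠ g) (hrb : r ≠ b) (hgb : g ≠ b)
    {t : Σ _ : V × V, V × V} (ht : t ∈ orderedK4s Γ col r g b) :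
    ({t.1.1, t.1.2, t.2.1, t.2.2} : Finset V) ∈ properK4s Γ col := by
  obtain ⟨⟨u, v⟩, x, y⟩ := t
  simp only [orderedK4s, k4Completions, mem_sigma, mem_colorPairs, mem_filter, mem_product,
    mem_commonNbrs] at ht
  obtain ⟨huv, ⟨⟨hux, hvx⟩, huy, hvy⟩, hxy⟩ := ht
  simp only [properK4s, mem_filter, mem_univ, true_and]
  refine ⟨u, v, x, y, rfl, huv.1, hux.1, huy.1, hvx.1, hvy.1, hxy.1, huv.2.trans hxy.2.symm,
    hux.2.trans hvy.2.symm, huy.2.trans hvx.2.symm, ?_, ?_, ?_⟩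
  · rw [huv.2, hux.2]; exact hrg
  · rw [huv.2, huy.2]; exact hrb
  · rw [hux.2, huy.2]; exact hgb

lemma IsK4Pattern.mem_orderedK4s {f : Fin 4 → V} {ρ : Equiv.Perm (Fin 3)}
    (hf : IsK4Pattern Γ col f ρ) :
    ⟨(f 0, f 1), (f 2, f 3)⟩ ∈ orderedK4s Γ col (ρ 0) (ρ 1) (ρ 2) := by
  simp only [orderedK4s, k4Completions, mem_sigma, mem_colorPairs, mem_filter, mem_product,
    mem_commonNbrs]
  exact ⟨hf 0 1 (by decide), ⟨⟨hf 0 2 (by decide), hf 1 2 (by decide)⟩,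
    hf 0 3 (by decide), hf 1 3 (by decide)⟩, hf 2 3 (by decide)⟩

lemma exists_isK4Pattern_of_mem_properK4s {s : Finset V} (hs : s ∈ properK4s Γ col)
    (ρ : Equiv.Perm (Fin 3)) : ∃ f, IsK4Pattern Γ col f ρ ∧ s = univ.image f := by
  simp only [properK4s, mem_filter, mem_univ, true_and] at hs
  obtain ⟨v₀, v₁, v₂, v₃, rfl, h₀₁, h₀₂, h₀₃, h₁₂, h₁₃, h₂₃, e₀, e₁, e₂, n₁, n₂, n₃⟩ := hs
  obtain ⟨σ, hσ₀, hσ₁, hσ₂⟩ := exists_perm_of_ne _ _ _ n₁ n₂ n₃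
  have hf : IsK4Pattern Γ col ![v₀, v₁, v₂, v₃] σ := isK4Pattern_vecCons
    ⟨h₀₁, hσ₀.symm⟩ ⟨h₂₃, (hσ₀.trans e₀).symm⟩ ⟨h₀₂, hσ₁.symm⟩ ⟨h₁₃, (hσ₁.trans e₁).symm⟩
    ⟨h₀₃, hσ₂.symm⟩ ⟨h₁₂, (hσ₂.trans e₂).symm⟩
  obtain ⟨π, hπ⟩ := exists_perm_pairColor (σ⁻¹ * ρ)
  refine ⟨![v₀, v₁, v₂, v₃] ∘ π, by simpa using hf.comp_perm π hπ, ?_⟩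
  rw [← image_image, image_univ_equiv, image_univ_fin_four]
  rfl

lemma four_le_card_filter_orderedK4s (hrg : r ≠ g) (hrb : r ≠ b) (hgb : g ≠ b) {s : Finset V}
    (hs : s ∈ properK4s Γ col) :
    4 ≤ #{t ∈ orderedK4s Γ col r g b | ({t.1.1, t.1.2, t.2.1, t.2.2} : Finset V) = s} := by
  obtain ⟨ρ, rfl, rfl, rfl⟩ := exists_perm_of_ne r g b hrg hrb hgb
  obtain ⟨f, hf, rfl⟩ := exists_isK4Pattern_of_mem_properK4s hs ρ
  choose π hπ₀ hπ using exists_perm_pairColor_apply_zero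
  have hfπ (k : Fin 4) : IsK4Pattern Γ col (f ∘ π k) ρ := by
    simpa using hf.comp_perm (τ := 1) (π k) (by simpa using hπ k)
  let t (k : Fin 4) : Σ _ : V × V, V × V := ⟨(f (π k 0), f (π k 1)), (f (π k 2), f (π k 3))⟩
  calc 4 = #(univ : Finset (Fin 4)) := rfl
    _ ≤ _ := card_le_card_of_injOn t (fun k _ => ?_) (fun k _ k' _ h => ?_)
  · rw [coe_filter]
    refine ⟨(hfπ k).mem_orderedK4s, ?_⟩
    rw [← image_univ_equiv (π k), image_image, image_univ_fin_four]
    rfl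
  · have h₀ := congrArg (fun t => t.1.1) h
    simp only [t, hπ₀] at h₀
    exact hf.injective h₀

lemma four_mul_card_properK4s_le (hrg : r ≠ g) (hrb : r ≠ b) (hgb : g ≠ b) :
    4 * #(properK4s Γ col) ≤ #(orderedK4s Γ col r g b) :=
  mul_card_image_le_card_of_maps_to (fun _ ht => mem_properK4s_of_mem_orderedK4s hrg hrb hgb ht)
    4 fun _ hs => four_le_card_filter_orderedK4s hrg hrb hgb hs

lemma four_mul_card_properK4s_le_mul (hrg : r ≠ g) (hrb : r ≠ b) (hgb : g ≠ b) :
    4 * #(properK4s Γ col) ≤ #(colorEdges Γ col b) * #(colorEdges Γ col g) :=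
  (four_mul_card_properK4s_le hrg hrb hgb).trans
    (card_orderedK4s_le.trans (card_commonNbrPairs_le hrg hrb hgb))

-- Equality throughout the chain of `four_mul_card_properK4s_le_mul`.
variable (Γ col) in
structure IsTight : Prop where
  linked : IsLinked Γ col
  card_commonNbrs_eq : ∀ ⦃r g b : Fin 3⦄, r ≠ g → r ≠ b → g ≠ b →
    ∀ p ∈ colorPairs Γ col r, #(commonNbrs Γ col g b p) = #(commonNbrs Γ col b g p)

lemma isTight_of_card_colorEdges_mul_le (h : ∀ ⦃g b : Fin 3⦄, g ≠ b →
      #(colorEdges Γ col b) * #(colorEdges Γ col g) ≤ 4 * #(properK4s Γ col)) :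
    IsTight Γ col where
  linked _ _ _ hrg hrb hgb := edgesLinked_of_card_le hrg hrb hgb
    ((h hgb).trans ((four_mul_card_properK4s_le hrg hrb hgb).trans card_orderedK4s_le))
  card_commonNbrs_eq _ _ _ hrg hrb hgb _ := card_commonNbrs_eq_of_card_le
    ((card_commonNbrPairs_le hrg hrb hgb).trans ((h hgb).trans
      (four_mul_card_properK4s_le hrg hrb hgb)))

lemma le_of_mul_mul_eq_pow_three {n x y z : ℕ} (hn : 0 < n) (hy : n ≤ y) (hz : n ≤ z)
    (h : x * y * z = n ^ 3) : x ≤ n := by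
  by_contra! hx
  have : n * n * n < x * y * z :=
    calc n * n * n < x * n * n := by gcongr
      _ ≤ x * y * z := by gcongr
  rw [h] at this
  linarith [pow_three n]

lemma card_colorEdges_mul_le
    (hcube : (4 * #(properK4s Γ col)) ^ 3
      = (#(colorEdges Γ col 0) * #(colorEdges Γ col 1) * #(colorEdges Γ col 2)) ^ 2)
    (hpos : 0 < #(properK4s Γ col)) ⦃g b : Fin 3⦄ (hgb : g ≠ b) :
    #(colorEdges Γ col b) * #(colorEdges Γ col g) ≤ 4 * #(properK4s Γ col) := by
  have h₁₂ := four_mul_card_properK4s_le_mul (Γ := Γ) (col := col) (r := 0) (g := 1) (b := 2)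
    (by decide) (by decide) (by decide)
  have h₀₂ := four_mul_card_properK4s_le_mul (Γ := Γ) (col := col) (r := 1) (g := 0) (b := 2)
    (by decide) (by decide) (by decide)
  have h₀₁ := four_mul_card_properK4s_le_mul (Γ := Γ) (col := col) (r := 2) (g := 0) (b := 1)
    (by decide) (by decide) (by decide)
  have hn : 0 < 4 * #(properK4s Γ col) := by omega
  have e₁₂ := le_of_mul_mul_eq_pow_three (x := #(colorEdges Γ col 2) * #(colorEdges Γ col 1))
    hn h₀₂ h₀₁ (by rw [hcube]; ring)
  have e₀₂ := le_of_mul_mul_eq_pow_three (x := #(colorEdges Γ col 2) * #(colorEdges Γ col 0))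
    hn h₁₂ h₀₁ (by rw [hcube]; ring)
  have e₀₁ := le_of_mul_mul_eq_pow_three (x := #(colorEdges Γ col 1) * #(colorEdges Γ col 0))
    hn h₁₂ h₀₂ (by rw [hcube]; ring)
  fin_cases g <;> fin_cases b <;> simp only [Fin.zero_eta, Fin.mk_one, Fin.reduceFinMk] at hgb ⊢
    <;> first
    | exact absurd rfl hgb
    | linarith [mul_comm #(colorEdges Γ col 0) #(colorEdges Γ col 1),
        mul_comm #(colorEdges Γ col 0) #(colorEdges Γ col 2),
        mul_comm #(colorEdges Γ col 1) #(colorEdges Γ col 2)]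

end Counting

section Blowup

variable {Γ : SimpleGraph V} {col : Sym2 V → Fin 3} {f : Fin 4 → V} {σ : Equiv.Perm (Fin 3)}
  {u v : V} {i j k m : Fin 4}

variable (Γ) in
def blowupPart (f : Fin 4 → V) (i : Fin 4) : Finset V := {v | (∃ w, Γ.Adj v w) ∧ ¬Γ.Adj v (f i)}

lemma coloredAdj_of_mem_blowupPart (hL : IsLinked Γ col) (hf : IsK4Pattern Γ col f σ)
    (hv : v ∈ blowupPart Γ f i) (hji : j ≠ i) :
    ColoredAdj Γ col (σ (pairColor i j)) v (f j) := by
  simp only [blowupPart, mem_filter, mem_univ, true_and] at hv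
  obtain ⟨⟨w, hvw⟩, hvi⟩ := hv
  exact hL.coloredAdj_of_not_adj hf.exists_coloredAdj hvw (hf i j hji.symm) hvi

lemma eq_of_mem_blowupPart (hL : IsLinked Γ col) (hf : IsK4Pattern Γ col f σ)
    (hi : v ∈ blowupPart Γ f i) (hj : v ∈ blowupPart Γ f j) : i = j := by
  by_contra hij
  simp only [blowupPart, mem_filter, mem_univ, true_and] at hi
  exact hi.2 (coloredAdj_of_mem_blowupPart hL hf hj hij).1

lemma exists_mem_blowupPart (hL : IsLinked Γ col) (hf : IsK4Pattern Γ col f σ) {w : V}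
    (hvw : Γ.Adj v w) : ∃ i, v ∈ blowupPart Γ f i := by
  obtain ⟨i, hi⟩ := exists_not_adj_of_isK4Pattern hL hf v
  exact ⟨i, by simpa [blowupPart] using ⟨⟨w, hvw⟩, hi⟩⟩

lemma coloredAdj_of_mem_blowupPart_of_ne (hL : IsLinked Γ col) (hf : IsK4Pattern Γ col f σ)
    (hu : u ∈ blowupPart Γ f i) (hv : v ∈ blowupPart Γ f j) (hij : i ≠ j) :
    ColoredAdj Γ col (σ (pairColor i j)) u v := by
  obtain ⟨k, hki, hkj⟩ := exists_ne_ne i j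
  have huk := coloredAdj_of_mem_blowupPart hL hf hu hki
  have hvk := coloredAdj_of_mem_blowupPart hL hf hv hkj
  obtain ⟨hrg, hrb, hgb⟩ := pairColor_triangle_ne i j k hij hki.symm hkj.symm
  obtain ⟨u', y, v', x, hu', hv', huv, -, -⟩ :=
    hL (σ.injective.ne hrg) (σ.injective.ne hrb) (σ.injective.ne hgb) huk hvk
  rcases Sym2.eq_iff.mp hu' with ⟨rfl, rfl⟩ | ⟨rfl, rfl⟩ <;>
    rcases Sym2.eq_iff.mp hv' with ⟨rfl, rfl⟩ | ⟨rfl, rfl⟩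
  · exact huv
  · exact absurd (huv.unique huk) (σ.injective.ne hrb)
  · exact absurd (huv.unique hvk.symm) (σ.injective.ne hrg)
  · exact absurd huv.1 (Γ.irrefl)

lemma not_adj_of_mem_blowupPart (hL : IsLinked Γ col) (hf : IsK4Pattern Γ col f σ)
    (hu : u ∈ blowupPart Γ f i) (hv : v ∈ blowupPart Γ f i) : ¬Γ.Adj u v := by
  intro huv
  obtain ⟨k, hki, hk⟩ := exists_pairColor_ne i (σ.symm (col s(u, v)))
  have huk := (coloredAdj_of_mem_blowupPart hL hf hu hki).symm
  have hvk := (coloredAdj_of_mem_blowupPart hL hf hv hki).symm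
  exact hk (σ.eq_symm_apply.mpr (hL.coloredAdj_of_coloredAdj huv huk hvk).2.symm)

lemma mem_blowupPart_iff (hL : IsLinked Γ col) (hf : IsK4Pattern Γ col f σ) (hkm : k ≠ m) :
    v ∈ blowupPart Γ f m ↔ ColoredAdj Γ col (σ (pairColor m k)) (f k) v := by
  refine ⟨fun hv => (coloredAdj_of_mem_blowupPart hL hf hv hkm).symm, fun hv => ?_⟩
  obtain ⟨m', hm'⟩ := exists_mem_blowupPart hL hf hv.1.symm
  have hkm' : k ≠ m' := by
    rintro rfl
    simp only [blowupPart, mem_filter, mem_univ, true_and] at hm'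
    exact hm'.2 hv.1.symm
  have hc := (coloredAdj_of_mem_blowupPart hL hf hm' hkm').symm.unique hv
  rwa [pairColor_left_injective m' m k hkm'.symm hkm.symm (σ.injective hc)] at hm'

lemma commonNbrs_eq_blowupPart (hL : IsLinked Γ col) (hf : IsK4Pattern Γ col f σ) {k l : Fin 4}
    (hkm : k ≠ m) (hlm : l ≠ m) :
    commonNbrs Γ col (σ (pairColor m k)) (σ (pairColor m l)) (f k, f l) = blowupPart Γ f m := by
  ext v
  rw [mem_commonNbrs]
  exact ⟨fun hv => (mem_blowupPart_iff hL hf hkm).mpr hv.1,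
    fun hv => ⟨(mem_blowupPart_iff hL hf hkm).mp hv, (mem_blowupPart_iff hL hf hlm).mp hv⟩⟩

lemma card_blowupPart_eq (h : IsTight Γ col) (hf : IsK4Pattern Γ col f σ) (m m' : Fin 4) :
    #(blowupPart Γ f m) = #(blowupPart Γ f m') := by
  rcases eq_or_ne m m' with rfl | hmm'
  · rfl
  obtain ⟨k, l, hkl, hkm, hlm, hkm', hlm', e₁, e₂⟩ := exists_pairColor_eq_pairColor m m' hmm'
  obtain ⟨hmk, hml, hkl'⟩ := pairColor_triangle_ne m k l hkm.symm hlm.symm hkl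
  have := h.card_commonNbrs_eq (σ.injective.ne hmk.symm) (σ.injective.ne hkl')
    (σ.injective.ne hml) (f k, f l) (mem_colorPairs.mpr (hf k l hkl))
  rwa [commonNbrs_eq_blowupPart h.linked hf hkm hlm, e₁, e₂,
    commonNbrs_eq_blowupPart h.linked hf hkm' hlm'] at this

lemma exists_option_eq_some_iff {α β : Type*} (R : α → β → Prop)
    (hR : ∀ a b b', R a b → R a b' → b = b') : ∃ P : α → Option β, ∀ a b, P a = some b ↔ R a b := by
  refine ⟨fun a => if h : ∃ b, R a b then some h.choose else none, fun a b => ?_⟩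
  dsimp only
  split_ifs with h
  · exact ⟨fun hb => Option.some.inj hb ▸ h.choose_spec,
      fun hb => congrArg some (hR _ _ _ h.choose_spec hb)⟩
  · simpa using fun hb => h ⟨b, hb⟩

theorem IsK4Pattern.isBalancedBlowupK4PlusIsolated (h : IsTight Γ col)
    (hf : IsK4Pattern Γ col f σ) : IsBalancedBlowupK4PlusIsolated Γ col := by
  obtain ⟨P, hP⟩ := exists_option_eq_some_iff (fun v i => v ∈ blowupPart Γ f i)
    fun _ _ _ => eq_of_mem_blowupPart h.linked hf
  have hne {u v : V} {i j : Fin 4} (hu : P u = some i) (hv : P v = some j) (huv : Γ.Adj u v) :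
      i ≠ j := by
    rintro rfl
    exact not_adj_of_mem_blowupPart h.linked hf ((hP u i).mp hu) ((hP v i).mp hv) huv
  refine ⟨P, σ, fun u v => ⟨fun huv => ?_, ?_⟩, fun u v i j hu hv huv => ?_, fun i j => ?_⟩
  · obtain ⟨i, hi⟩ := exists_mem_blowupPart h.linked hf huv
    obtain ⟨j, hj⟩ := exists_mem_blowupPart h.linked hf huv.symm
    exact ⟨i, j, hne ((hP u i).mpr hi) ((hP v j).mpr hj) huv, (hP u i).mpr hi, (hP v j).mpr hj⟩
  · rintro ⟨i, j, hij, hu, hv⟩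
    exact (coloredAdj_of_mem_blowupPart_of_ne h.linked hf ((hP u i).mp hu) ((hP v j).mp hv)
      hij).1
  · exact (coloredAdj_of_mem_blowupPart_of_ne h.linked hf ((hP u i).mp hu) ((hP v j).mp hv)
      (hne hu hv huv)).2
  · have hpart (i : Fin 4) : ({v | P v = some i} : Finset V) = blowupPart Γ f i := by
      ext v
      simpa using hP v i
    simpa only [hpart] using card_blowupPart_eq h hf i j

theorem IsTight.isBalancedBlowupK4PlusIsolated (h : IsTight Γ col)
    (hK : (properK4s Γ col).Nonempty) : IsBalancedBlowupK4PlusIsolated Γ col := by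
  obtain ⟨s, hs⟩ := hK
  obtain ⟨f, hf, -⟩ := exists_isK4Pattern_of_mem_properK4s hs 1
  exact hf.isBalancedBlowupK4PlusIsolated h

end Blowup

lemma pow_three_eq_sq_of_eq_rpow {a m : ℕ} (h : (a : ℝ) = (m : ℝ) ^ ((2 : ℝ) / 3)) :
    a ^ 3 = m ^ 2 := by
  have : (a : ℝ) ^ 3 = (m : ℝ) ^ 2 := by
    rw [h, ← Real.rpow_natCast, ← Real.rpow_mul (Nat.cast_nonneg m)]
    norm_num
  exact_mod_cast this

/-- If a 3-edge-colored graph has exactly `(1/4)·(R·G·B)^(2/3) > 0` properly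
3-edge-colored copies of `K₄`, then it is obtained from a balanced blowup of a
properly 3-edge-colored `K₄` by possibly adding a set of isolated vertices. -/
theorem stmt3 (Γ : SimpleGraph V) (col : Sym2 V → Fin 3) (R G B K : ℕ)
    (hR : R = (colorEdges Γ col 0).card)
    (hG : G = (colorEdges Γ col 1).card)
    (hB : B = (colorEdges Γ col 2).card)
    (hK : K = (properK4s Γ col).card)
    (heq : (K : ℝ) = (1 / 4) * ((R : ℝ) * G * B) ^ ((2 : ℝ) / 3))
    (hpos : 0 < K) :
    IsBalancedBlowupK4PlusIsolated Γ col := by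
  subst hR hG hB hK
  have hcube := pow_three_eq_sq_of_eq_rpow (a := 4 * #(properK4s Γ col))
    (m := #(colorEdges Γ col 0) * #(colorEdges Γ col 1) * #(colorEdges Γ col 2))
    (by push_cast; rw [heq]; ring)
  have htight := isTight_of_card_colorEdges_mul_le (card_colorEdges_mul_le hcube hpos)
  exact htight.isBalancedBlowupK4PlusIsolated (card_pos.mp hpos)

end RainbowTri
end
end

section
/- Let Γ be a finite simple graph each of whose edges is colored with one of six colors 1,…,6, and let C_i denote the number of edges of color i. Fix a rainbow 6-edge-coloring χ of K4 (an assignment of the six colors bijectively to the six edges of K4), and let H be the number of 4-vertex subsets of Γ that induce a complete graph whose edge coloring is isomorphic to χ. Then H^3 ≤ C_1·C_2·C_3·C_4·C_5·C_6. -/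
/-! For each of the three perfect matchings `{e, e'}` of `K₄`, a copy of `χ` is determined by its
two edges of colours `χ e` and `χ e'`, whose endpoints are its four vertices, so
`H ≤ C (χ e) * C (χ e')`. Multiplying the three bounds, every edge of `K₄` occurs exactly once,
and since `χ` is a bijection onto the six colours the right-hand side is `∏ C i`. -/

open scoped Classical

noncomputable section

namespace RainbowK4

variable {V : Type*} [Fintype V]

/-- The finset of edges of `Γ` having color `c` among the six colors `Fin 6`. -/
def colorEdges6 (Γ : SimpleGraph V) (col : Sym2 V → Fin 6) (c : Fin 6) : Finset (Sym2 V) :=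
  Finset.univ.filter (fun e => e ∈ Γ.edgeSet ∧ col e = c)

/-- `χ` is a rainbow 6-edge-coloring of `K₄` (on vertex set `Fin 4`): distinct edges
(non-diagonal elements of `Sym2 (Fin 4)`) receive distinct colors. -/
def IsRainbowK4Coloring (χ : Sym2 (Fin 4) → Fin 6) : Prop :=
  ∀ e e' : Sym2 (Fin 4), ¬e.IsDiag → ¬e'.IsDiag → χ e = χ e' → e = e'

/-- The 4-vertex subsets of `Γ` inducing a complete graph whose edge coloring is
isomorphic to `χ`. -/
def chiCopies (Γ : SimpleGraph V) (col : Sym2 V → Fin 6) (χ : Sym2 (Fin 4) → Fin 6) :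
    Finset (Finset V) :=
  Finset.univ.filter (fun s => ∃ f : Fin 4 → V, Function.Injective f ∧
    s = Finset.univ.image f ∧
    ∀ i j : Fin 4, i ≠ j → Γ.Adj (f i) (f j) ∧ col s(f i, f j) = χ s(i, j))

theorem card_chiCopies_le_mul (Γ : SimpleGraph V) (col : Sym2 V → Fin 6)
    (χ : Sym2 (Fin 4) → Fin 6) (i j k l : Fin 4) (hij : i ≠ j) (hkl : k ≠ l)
    (hu : ({i, j, k, l} : Finset (Fin 4)) = Finset.univ) :
    (chiCopies Γ col χ).card ≤
      (colorEdges6 Γ col (χ s(i, j))).card * (colorEdges6 Γ col (χ s(k, l))).card := by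
  rw [← Finset.card_product]
  refine Finset.card_le_card_of_forall_subsingleton
    (fun s p => ∀ v, v ∈ s ↔ v ∈ p.1 ∨ v ∈ p.2) (fun s hs => ?_) (fun p _ s hs t ht => ?_)
  · obtain ⟨f, -, rfl, hf⟩ := (Finset.mem_filter.mp hs).2
    refine ⟨(s(f i, f j), s(f k, f l)), ?_, fun v => ?_⟩
    · simp only [Finset.mem_product, colorEdges6, Finset.mem_filter, Finset.mem_univ, true_and,
        SimpleGraph.mem_edgeSet]
      exact ⟨hf i j hij, hf k l hkl⟩
    · rw [← hu]
      simp only [Finset.image_insert, Finset.image_singleton, Finset.mem_insert,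
        Finset.mem_singleton, Sym2.mem_iff, or_assoc]
  · ext v
    rw [hs.2, ht.2]

theorem prod_edgeFinset_top_comp_eq_prod {M : Type*} [CommMonoid M] {χ : Sym2 (Fin 4) → Fin 6}
    (hχ : IsRainbowK4Coloring χ) (g : Fin 6 → M) :
    ∏ e ∈ (⊤ : SimpleGraph (Fin 4)).edgeFinset, g (χ e) = ∏ c, g c := by
  have hinj : Set.InjOn χ (⊤ : SimpleGraph (Fin 4)).edgeFinset := fun e he e' he' h =>
    hχ e e' (by simpa using he) (by simpa using he') h
  rw [← Finset.prod_image hinj]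
  congr
  refine Finset.eq_univ_of_card _ ?_
  rw [Finset.card_image_of_injOn hinj, SimpleGraph.card_edgeFinset_top_eq_card_choose_two]
  rfl

theorem edgeFinset_top_fin_four : (⊤ : SimpleGraph (Fin 4)).edgeFinset =
    {s(0, 1), s(2, 3), s(0, 2), s(1, 3), s(0, 3), s(1, 2)} := by
  decide

/-- If `Γ` is a 6-edge-colored graph with `C i` edges of color `i`, `χ` is a fixed
rainbow 6-edge-coloring of `K₄`, and `H` is the number of 4-vertex subsets of `Γ`
inducing a complete graph whose coloring is isomorphic to `χ`, then
`H³ ≤ C 1 · C 2 · C 3 · C 4 · C 5 · C 6`. -/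
theorem stmt5 (Γ : SimpleGraph V) (col : Sym2 V → Fin 6)
    (χ : Sym2 (Fin 4) → Fin 6) (hχ : IsRainbowK4Coloring χ)
    (C : Fin 6 → ℕ) (hC : ∀ i, C i = (colorEdges6 Γ col i).card)
    (H : ℕ) (hH : H = (chiCopies Γ col χ).card) :
    H ^ 3 ≤ ∏ i : Fin 6, C i := by
  obtain rfl : C = fun i => (colorEdges6 Γ col i).card := funext hC
  subst hH
  have h₁ := card_chiCopies_le_mul Γ col χ 0 1 2 3 (by decide) (by decide) (by decide)
  have h₂ := card_chiCopies_le_mul Γ col χ 0 2 1 3 (by decide) (by decide) (by decide)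
  have h₃ := card_chiCopies_le_mul Γ col χ 0 3 1 2 (by decide) (by decide) (by decide)
  rw [← prod_edgeFinset_top_comp_eq_prod hχ, edgeFinset_top_fin_four]
  repeat rw [Finset.prod_insert (by decide)]
  rw [Finset.prod_singleton]
  calc _ = _ * _ * _ := pow_three' _
    _ ≤ _ := Nat.mul_le_mul (Nat.mul_le_mul h₁ h₂) h₃
    _ = _ := by ring

end RainbowK4
end
end

section
/- Let Γ be a finite simple graph each of whose edges is colored red, green, or blue, with G green edges and B blue edges. Let S be the set of ordered tuples (u,v,x,y) of vertices of Γ (where x = y is allowed) such that uv is a red edge, ux and uy are blue edges, and vx and vy are green edges. Then |S| ≤ G·B. -/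
open scoped Classical

noncomputable section

namespace RainbowTri

variable {V : Type*} [Fintype V]

/- Reading a tuple `(u, v, x, y) ∈ S` as the pair (green edge `vx`, blue edge `uy`) loses
nothing. Reading `vx` backwards would make the edge from `u` or `y` to `v` blue, but `uv` is
red and `yv` is green; reading only `uy` backwards would make `yv` red. Hence `|S| ≤ G·B`. -/

def tupleEdges (t : V × V × V × V) : Sym2 V × Sym2 V :=
  (s(t.2.1, t.2.2.1), s(t.1, t.2.2.2))

theorem tupleEdges_mapsTo (Γ : SimpleGraph V) (col : Sym2 V → Fin 3) :
    Set.MapsTo tupleEdges (tupleSet Γ col : Set (V × V × V × V))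
      (colorEdges Γ col 1 ×ˢ colorEdges Γ col 2 : Finset (Sym2 V × Sym2 V)) := by
  rintro ⟨u, v, x, y⟩ ht
  simp only [tupleSet, Finset.mem_coe, Finset.mem_filter, Finset.mem_univ, true_and] at ht
  obtain ⟨-, -, -, -, huy, huy_blue, hvx, hvx_green, -, -⟩ := ht
  simp only [tupleEdges, Finset.mem_coe, Finset.mem_product, colorEdges, Finset.mem_filter,
    Finset.mem_univ, true_and, SimpleGraph.mem_edgeSet]
  exact ⟨⟨hvx, hvx_green⟩, ⟨huy, huy_blue⟩⟩

theorem tupleEdges_injOn (Γ : SimpleGraph V) (col : Sym2 V → Fin 3) :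
    Set.InjOn tupleEdges (tupleSet Γ col : Set (V × V × V × V)) := by
  rintro ⟨u, v, x, y⟩ ht ⟨u', v', x', y'⟩ ht' he
  simp only [tupleSet, Finset.mem_coe, Finset.mem_filter, Finset.mem_univ, true_and] at ht ht'
  obtain ⟨-, huv, -, -, -, -, -, -, -, hvy⟩ := ht
  obtain ⟨-, huv', -, hux', -, -, -, -, -, -⟩ := ht'
  simp only [tupleEdges, Prod.mk.injEq, Sym2.eq_iff] at he
  obtain ⟨⟨rfl, rfl⟩ | ⟨rfl, rfl⟩, ⟨rfl, rfl⟩ | ⟨rfl, rfl⟩⟩ := he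
  · rfl
  · rw [Sym2.eq_swap, hvy] at huv'
    exact absurd huv' (by decide)
  · rw [huv] at hux'
    exact absurd hux' (by decide)
  · rw [Sym2.eq_swap, hvy] at hux'
    exact absurd hux' (by decide)

/-- The number of ordered tuples `(u,v,x,y)` with `uv` red, `ux`, `uy` blue and
`vx`, `vy` green (`x = y` allowed) is at most `G·B`. -/
theorem stmt6 (Γ : SimpleGraph V) (col : Sym2 V → Fin 3) (G B : ℕ)
    (hG : G = (colorEdges Γ col 1).card)
    (hB : B = (colorEdges Γ col 2).card) :
    (tupleSet Γ col).card ≤ G * B := by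
  rw [hG, hB, ← Finset.card_product]
  exact Finset.card_le_card_of_injOn tupleEdges (tupleEdges_mapsTo Γ col)
    (tupleEdges_injOn Γ col)

end RainbowTri
end
end

section
/- Let Γ be a finite simple graph each of whose edges is colored red, green, or blue, and suppose that: (a) for every pair of edges e1, e2 of distinct colors c1 and c2, some edge of the third color joins an endpoint of e1 to an endpoint of e2; and (b) there exists an integer d ≥ 1 such that every vertex of Γ is incident to exactly d red, exactly d green, and exactly d blue edges. Then Γ is connected. -/
open scoped Classical

noncomputable section

namespace RainbowTri

variable {V : Type*} [Fintype V]

/-- If (a) for every pair of edges of distinct colors some edge of the third color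
joins an endpoint of one to an endpoint of the other, and (b) there is a `d ≥ 1` such
that every vertex is incident to exactly `d` edges of each color, then any two
vertices of `Γ` are joined by a path. -/
theorem stmt9 (Γ : SimpleGraph V) (col : Sym2 V → Fin 3)
    (ha : ∀ a b a' b' : V, Γ.Adj a b → Γ.Adj a' b' → col s(a, b) ≠ col s(a', b') →
      ∃ x y : V, (x = a ∨ x = b) ∧ (y = a' ∨ y = b') ∧ Γ.Adj x y ∧
        col s(x, y) ≠ col s(a, b) ∧ col s(x, y) ≠ col s(a', b'))
    (hb : ∃ d : ℕ, 1 ≤ d ∧ ∀ v : V, ∀ c : Fin 3,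
      (Finset.univ.filter (fun w => Γ.Adj v w ∧ col s(v, w) = c)).card = d) :
    Γ.Preconnected := by
  obtain ⟨d, hd1, hd⟩ := hb
  intro u v
  have hu : (Finset.univ.filter (fun w => Γ.Adj u w ∧ col s(u, w) = 0)).Nonempty := by
    rw [← Finset.card_pos, hd u 0]; omega
  have hv : (Finset.univ.filter (fun w => Γ.Adj v w ∧ col s(v, w) = 1)).Nonempty := by
    rw [← Finset.card_pos, hd v 1]; omega
  obtain ⟨a, hamem⟩ := hu
  obtain ⟨b, hbmem⟩ := hv
  simp only [Finset.mem_filter] at hamem hbmem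
  obtain ⟨-, hua, hca⟩ := hamem
  obtain ⟨-, hvb, hcb⟩ := hbmem
  have hne : col s(u, a) ≠ col s(v, b) := by rw [hca, hcb]; decide
  obtain ⟨x, y, hx, hy, hxy, -, -⟩ := ha u a v b hua hvb hne
  have r1 : Γ.Reachable u x := by
    rcases hx with rfl | rfl
    · exact SimpleGraph.Reachable.refl _
    · exact hua.reachable
  have r2 : Γ.Reachable y v := by
    rcases hy with rfl | rfl
    · exact SimpleGraph.Reachable.refl _
    · exact hvb.reachable.symm
  exact (r1.trans hxy.reachable).trans r2

end RainbowTri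
end
end

section
/- Let Γ be a finite simple graph each of whose edges is colored red, green, or blue, with G green edges and B blue edges. Let S be the set of ordered tuples (u,v,x,y) of vertices such that uv is a red edge, ux and uy are blue edges, and vx and vy are green edges (x = y allowed). If |S| = G·B, then for every green edge g and every blue edge b of Γ there exists a tuple (u,v,x,y) ∈ S with b = {u,x} and g = {v,y}; in particular, some red edge joins an endpoint of g to an endpoint of b. -/
open scoped Classical

noncomputable section

namespace RainbowTri

variable {V : Type*} [Fintype V]

/-- If `|S| = G·B`, then for every green edge `g` and every blue edge `b` there is a
tuple `(u,v,x,y) ∈ S` with `b = {u,x}` and `g = {v,y}`; in particular, some red edge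
joins an endpoint of `g` to an endpoint of `b`. -/
theorem stmt11 (Γ : SimpleGraph V) (col : Sym2 V → Fin 3) (G B : ℕ)
    (hG : G = (colorEdges Γ col 1).card)
    (hB : B = (colorEdges Γ col 2).card)
    (hS : (tupleSet Γ col).card = G * B) :
    ∀ g ∈ colorEdges Γ col 1, ∀ b ∈ colorEdges Γ col 2,
      (∃ u v x y : V, (u, v, x, y) ∈ tupleSet Γ col ∧ s(u, x) = b ∧ s(v, y) = g) ∧
      (∃ u v : V, Γ.Adj u v ∧ col s(u, v) = 0 ∧ u ∈ b ∧ v ∈ g) := by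
  classical
  set S := tupleSet Γ col with hSdef
  set f : V × V × V × V → Sym2 V × Sym2 V :=
    fun t => (s(t.2.1, t.2.2.2), s(t.1, t.2.2.1)) with hf
  have hmem : ∀ t ∈ S, Γ.Adj t.1 t.2.1 ∧ col s(t.1, t.2.1) = 0 ∧
      Γ.Adj t.1 t.2.2.1 ∧ col s(t.1, t.2.2.1) = 2 ∧
      Γ.Adj t.1 t.2.2.2 ∧ col s(t.1, t.2.2.2) = 2 ∧
      Γ.Adj t.2.1 t.2.2.1 ∧ col s(t.2.1, t.2.2.1) = 1 ∧
      Γ.Adj t.2.1 t.2.2.2 ∧ col s(t.2.1, t.2.2.2) = 1 := by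
    intro t ht
    simpa [hSdef, tupleSet] using ht
  have hsub : S.image f ⊆ (colorEdges Γ col 1) ×ˢ (colorEdges Γ col 2) := by
    intro p hp
    obtain ⟨t, ht, hft⟩ := Finset.mem_image.1 hp
    obtain ⟨h1, h2, h3, h4, h5, h6, h7, h8, h9, h10⟩ := hmem t ht
    rw [Finset.mem_product, ← hft]
    constructor
    · simp [colorEdges, hf, SimpleGraph.mem_edgeSet, h9, h10]
    · simp [colorEdges, hf, SimpleGraph.mem_edgeSet, h3, h4]
  have hinj : Set.InjOn f ↑S := by
    rintro ⟨u, v, x, y⟩ ht ⟨u', v', x', y'⟩ ht' hfe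
    obtain ⟨a1, a2, a3, a4, a5, a6, a7, a8, a9, a10⟩ := hmem _ ht
    obtain ⟨b1, b2, b3, b4, b5, b6, b7, b8, b9, b10⟩ := hmem _ ht'
    simp only [hf, Prod.mk.injEq, Sym2.eq, Sym2.rel_iff', Prod.mk.injEq,
      Prod.swap_prod_mk] at hfe
    have hcvx : col s(x, v) = 1 := by rw [Sym2.eq_swap]; exact a8
    rcases hfe with ⟨hgreen, hblue⟩
    rcases hblue with ⟨rfl, rfl⟩ | ⟨rfl, rfl⟩
    · rcases hgreen with ⟨rfl, rfl⟩ | ⟨rfl, rfl⟩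
      · rfl
      · exact absurd (b2.symm.trans a6) (by decide)
    · rcases hgreen with ⟨rfl, rfl⟩ | ⟨rfl, rfl⟩
      · exact absurd (b2.symm.trans hcvx) (by decide)
      · exact absurd (b6.symm.trans hcvx) (by decide)
  have hcard : (S.image f).card = G * B := by
    rw [Finset.card_image_of_injOn hinj, hS]
  have heq : S.image f = (colorEdges Γ col 1) ×ˢ (colorEdges Γ col 2) := by
    apply Finset.eq_of_subset_of_card_le hsub
    rw [Finset.card_product, ← hG, ← hB, hcard]
  intro g hg b hb
  have hpmem : (g, b) ∈ S.image f := by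
    rw [heq, Finset.mem_product]; exact ⟨hg, hb⟩
  obtain ⟨⟨u, v, x, y⟩, htS, hft⟩ := Finset.mem_image.1 hpmem
  simp only [hf, Prod.mk.injEq] at hft
  obtain ⟨hgreen, hblue⟩ := hft
  obtain ⟨a1, a2, a3, a4, a5, a6, a7, a8, a9, a10⟩ := hmem _ htS
  refine ⟨⟨u, v, x, y, htS, hblue, hgreen⟩, ⟨u, v, a1, a2, ?_, ?_⟩⟩
  · rw [← hblue]; exact Sym2.mem_mk_left u x
  · rw [← hgreen]; exact Sym2.mem_mk_left v y

end RainbowTri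
end
end
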